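/- Let X be a real normed space with dual X*, and let f : X → ℝ be convex and Gâteaux differentiable with gradient ∇f : X → X*. Let N ≥ 1, let t₁, …, t_N ≥ 0 with Σ_{i=1}^N t_i = 1, let x₁, …, x_N ∈ X, and suppose w ∈ X satisfies ∇f(w) = Σ_{i=1}^N t_i ∇f(x_i). Then for every z ∈ X, D_f(z, w) ≤ Σ_{i=1}^N t_i D_f(z, x_i). -/
import Mathlib


open Filter Topology

/-- The Bregman distance associated with `f` and its gradient map `gf`. -/
noncomputable def Df {X : Type*} [NormedAddCommGroup X] [NormedSpace ℝ X]
    (f : X → ℝ) (gf : X → X →L[ℝ] ℝ) (y x : X) : ℝ :=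
  f y - f x - gf x (y - x)

lemma subgrad_ineq {X : Type*} [NormedAddCommGroup X] [NormedSpace ℝ X]
    {f : X → ℝ} (hconv : ConvexOn ℝ Set.univ f) {c : ℝ} {p v : X}
    (hd : HasLineDerivAt ℝ f c p v) : c ≤ f (p + v) - f p := by
  have h1 := hconv.comp_affineMap (AffineMap.lineMap p (p + v) : ℝ →ᵃ[ℝ] X)
  rw [Set.preimage_univ] at h1
  have hd' : HasDerivAt (f ∘ (AffineMap.lineMap p (p + v) : ℝ →ᵃ[ℝ] X)) c 0 := by
    have : (f ∘ (AffineMap.lineMap p (p + v) : ℝ →ᵃ[ℝ] X)) = fun t : ℝ => f (p + t • v) := by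
      funext s
      simp [AffineMap.lineMap_apply, add_sub_cancel_left, add_comm]
    rw [this]
    exact hd
  have := h1.le_slope_of_hasDerivAt (Set.mem_univ 0) (Set.mem_univ 1) one_pos hd'
  rw [add_comm p v]
  simpa [slope_def_field, AffineMap.lineMap_apply, add_sub_cancel_left] using this

/-- If `∇f w = Σᵢ tᵢ ∇f(xᵢ)` with `tᵢ ≥ 0` summing to `1`, then
`D_f(z, w) ≤ Σᵢ tᵢ D_f(z, xᵢ)` for every `z`. -/
theorem bregman_convex_combination
    {X : Type*} [NormedAddCommGroup X] [NormedSpace ℝ X]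
    (f : X → ℝ) (gf : X → X →L[ℝ] ℝ)
    (hconv : ConvexOn ℝ Set.univ f)
    (hgf : ∀ p v : X, HasLineDerivAt ℝ f (gf p v) p v)
    (N : ℕ) (hN : 1 ≤ N)
    (t : Fin N → ℝ) (ht : ∀ i, 0 ≤ t i) (htsum : ∑ i, t i = 1)
    (x : Fin N → X) (w : X)
    (hw : gf w = ∑ i, t i • gf (x i)) :
    ∀ z : X, Df f gf z w ≤ ∑ i, t i * Df f gf z (x i) := by
  intro z
  have key : Df f gf z w = ∑ i, t i * (f z - f w - gf (x i) (z - w)) := by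
    have haux : ∀ (A : ℝ) (B : Fin N → ℝ), ∑ i, t i * (A - B i) = A - ∑ i, t i * B i := by
      intro A B
      have : ∑ i, t i * (A - B i) = ∑ i, (t i * A - t i * B i) := by
        simp [mul_sub]
      rw [this, Finset.sum_sub_distrib, ← Finset.sum_mul, htsum, one_mul]
    rw [haux]
    simp [Df, hw, ContinuousLinearMap.sum_apply, ContinuousLinearMap.smul_apply]
  rw [key]
  apply Finset.sum_le_sum
  intro i _
  apply mul_le_mul_of_nonneg_left _ (ht i)
  have hsub : gf (x i) (w - x i) ≤ f w - f (x i) := by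
    have := subgrad_ineq hconv (hgf (x i) (w - x i))
    simpa using this
  have hmap : gf (x i) (z - x i) = gf (x i) (z - w) + gf (x i) (w - x i) := by
    rw [← map_add]
    congr 1
    abel
  simp only [Df]
  linarith
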